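/- arXiv:1604.02769 — 2 statements merged into one kernel-verified Lean document; each statement's English description precedes it below -/
import Mathlib

section
/- Pick-l upper bound via sorting: Let α_{L_1} ≥ α_{L_2} ≥ ... ≥ α_{L_{C(n,l)}} be the values α_L over all l-element subsets L of {1,...,n}, sorted in descending order. Then α_k, defined as the maximum of α_K over all subsets K with |K| ≤ k, satisfies α_k ≤ (1/C(k-1,l-1)) · ∑_{i=1}^{C(k,l)} α_{L_i}, i.e., α_k is at most the sum of the C(k,l) largest values α_L divided by C(k-1,l-1). -/
/-!
Extend `K` to a set `K'` of exactly `k` indices; this can only increase `α_K`. For a null vector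
`z`, each `i ∈ K'` lies in `C(k-1, l-1)` of the `l`-subsets of `K'`, so `C(k-1, l-1)` times the
share of `‖z‖₁` carried by `K'` is the sum of the shares carried by these `C(k, l)` subsets, hence
at most the sum of their `α_L`, which in turn is at most the sum of the `C(k, l)` largest `α_L`.
-/

open Finset

noncomputable def alphaS {m n : ℕ} (A : Matrix (Fin m) (Fin n) ℝ) (S : Finset (Fin n)) : ℝ :=
  sSup {r : ℝ | ∃ z : Fin n → ℝ, A.mulVec z = 0 ∧ z ≠ 0 ∧
    r = (∑ i ∈ S, |z i|) / (∑ i, |z i|)}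

noncomputable def alphaK {m n : ℕ} (A : Matrix (Fin m) (Fin n) ℝ) (k : ℕ) : ℝ :=
  sSup {r : ℝ | ∃ K : Finset (Fin n), K.card ≤ k ∧ r = alphaS A K}

theorem Fin.val_le_val_of_strictMono {c N : ℕ} {f : Fin c → Fin N} (hf : StrictMono f)
    (j : Fin c) : (j : ℕ) ≤ f j := by
  have hsub : (Iic j).image f ⊆ Iic (f j) := by
    intro x hx
    obtain ⟨i, hi, rfl⟩ := mem_image.1 hx
    exact mem_Iic.2 (hf.monotone (mem_Iic.1 hi))
  simpa [card_image_of_injective _ hf.injective] using card_le_card hsub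

theorem Finset.sum_le_sum_filter_lt_card_of_antitone {M : Type*} [AddCommMonoid M] [PartialOrder M]
    [IsOrderedAddMonoid M] {N : ℕ} {v : Fin N → M} (hv : Antitone v) (s : Finset (Fin N)) :
    ∑ i ∈ s, v i ≤ ∑ i ∈ univ.filter (fun i : Fin N => (i : ℕ) < #s), v i := by
  have hc : #s ≤ N := by simpa using s.card_le_univ
  have hfirst : univ.filter (fun i : Fin N => (i : ℕ) < #s) = univ.map (Fin.castLEEmb hc) := by
    ext i
    simpa using ⟨fun hi => ⟨⟨i, hi⟩, rfl⟩, by rintro ⟨j, rfl⟩; exact j.isLt⟩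
  calc ∑ i ∈ s, v i = ∑ j : Fin #s, v (s.orderEmbOfFin rfl j) := by
        conv_lhs => rw [← s.map_orderEmbOfFin_univ rfl]
        rw [sum_map]
        rfl
    _ ≤ ∑ j : Fin #s, v (Fin.castLE hc j) := sum_le_sum fun j _ =>
        hv (Fin.le_def.2 (Fin.val_le_val_of_strictMono (s.orderEmbOfFin rfl).strictMono j))
    _ = ∑ i ∈ univ.filter (fun i : Fin N => (i : ℕ) < #s), v i := by
        rw [hfirst, sum_map]
        rfl

theorem Finset.sum_powersetCard_sum {α M : Type*} [DecidableEq α] [AddCommMonoid M] {l : ℕ}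
    (hl : 1 ≤ l) (K : Finset α) (w : α → M) :
    ∑ L ∈ K.powersetCard l, ∑ i ∈ L, w i = (#K - 1).choose (l - 1) • ∑ i ∈ K, w i := by
  rw [sum_comm' (t' := K) (s' := fun i => (K.powersetCard l).filter ({i} ⊆ ·)), smul_sum]
  · refine sum_congr rfl fun i hi => ?_
    rw [sum_const, card_filter_powersetCard_subset _ _ _ (singleton_subset_iff.2 hi)
      (by simpa using hl), card_singleton]
  · intro L i
    simp only [mem_powersetCard, mem_filter, singleton_subset_iff]
    exact ⟨fun ⟨⟨hLK, hL⟩, hi⟩ => ⟨⟨⟨hLK, hL⟩, hi⟩, hLK hi⟩, fun ⟨h, _⟩ => ⟨h.1, h.2⟩⟩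

theorem Finset.sum_powersetCard_eq_sum_filter {α M : Type*} [DecidableEq α] [AddCommMonoid M]
    {l N : ℕ} (e : Fin N ≃ {L : Finset α // #L = l}) (f : Finset α → M) (K : Finset α) :
    ∑ L ∈ K.powersetCard l, f L = ∑ i ∈ univ.filter (fun i => (e i).1 ⊆ K), f (e i).1 := by
  refine (sum_bij' (fun i _ => (e i).1) (fun L hL => e.symm ⟨L, (mem_powersetCard.1 hL).2⟩)
    (fun i hi => mem_powersetCard.2 ⟨(mem_filter.1 hi).2, (e i).2⟩)
    (fun L hL => by simpa using (mem_powersetCard.1 hL).1) (by simp) (by simp) (by simp)).symm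

theorem Finset.sum_powersetCard_le_sum_filter_lt {α M : Type*} [DecidableEq α] [AddCommMonoid M]
    [PartialOrder M] [IsOrderedAddMonoid M] {l N : ℕ} (e : Fin N ≃ {L : Finset α // #L = l})
    {f : Finset α → M} (hf : Antitone fun i => f (e i).1) (K : Finset α) :
    ∑ L ∈ K.powersetCard l, f L ≤
      ∑ i ∈ univ.filter (fun i : Fin N => (i : ℕ) < (#K).choose l), f (e i).1 := by
  have hcard : #(univ.filter fun i => (e i).1 ⊆ K) = (#K).choose l := by
    rw [← card_powersetCard, card_eq_sum_ones, card_eq_sum_ones,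
      sum_powersetCard_eq_sum_filter e (fun _ => 1) K]
  rw [sum_powersetCard_eq_sum_filter e, ← hcard]
  exact sum_le_sum_filter_lt_card_of_antitone hf _

section NullSpaceRatio

variable {m n : ℕ} (A : Matrix (Fin m) (Fin n) ℝ)

theorem alphaS_nonneg (S : Finset (Fin n)) : 0 ≤ alphaS A S :=
  Real.sSup_nonneg <| by
    rintro _ ⟨z, -, -, rfl⟩
    positivity

theorem div_le_alphaS {z : Fin n → ℝ} (hz : A.mulVec z = 0) (hz0 : z ≠ 0) (S : Finset (Fin n)) :
    (∑ i ∈ S, |z i|) / (∑ i, |z i|) ≤ alphaS A S := by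
  refine le_csSup ⟨1, ?_⟩ ⟨z, hz, hz0, rfl⟩
  rintro _ ⟨y, -, -, rfl⟩
  exact div_le_one_of_le₀ (sum_le_sum_of_subset_of_nonneg (subset_univ S)
    fun _ _ _ => abs_nonneg _) (by positivity)

theorem alphaS_le {S : Finset (Fin n)} {B : ℝ} (hB : 0 ≤ B)
    (h : ∀ z : Fin n → ℝ, A.mulVec z = 0 → z ≠ 0 → (∑ i ∈ S, |z i|) / (∑ i, |z i|) ≤ B) :
    alphaS A S ≤ B :=
  Real.sSup_le (by rintro _ ⟨z, hz, hz0, rfl⟩; exact h z hz hz0) hB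

theorem alphaS_mono {S T : Finset (Fin n)} (hST : S ⊆ T) : alphaS A S ≤ alphaS A T :=
  alphaS_le A (alphaS_nonneg A T) fun z hz hz0 =>
    (div_le_div_of_nonneg_right (sum_le_sum_of_subset_of_nonneg hST fun _ _ _ => abs_nonneg _)
      (by positivity)).trans (div_le_alphaS A hz hz0 T)

theorem choose_mul_alphaS_le_sum_powersetCard {l : ℕ} (hl : 1 ≤ l) (K : Finset (Fin n)) :
    ((#K - 1).choose (l - 1) : ℝ) * alphaS A K ≤ ∑ L ∈ K.powersetCard l, alphaS A L := by
  have hsum_nonneg : 0 ≤ ∑ L ∈ K.powersetCard l, alphaS A L :=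
    sum_nonneg fun L _ => alphaS_nonneg A L
  rcases ((#K - 1).choose (l - 1)).eq_zero_or_pos with hC | hC
  · simpa [hC] using hsum_nonneg
  have hC : (0 : ℝ) < (#K - 1).choose (l - 1) := by exact_mod_cast hC
  rw [← le_div_iff₀' hC]
  refine alphaS_le A (div_nonneg hsum_nonneg hC.le) fun z hz hz0 => ?_
  rw [le_div_iff₀' hC]
  calc ((#K - 1).choose (l - 1) : ℝ) * ((∑ i ∈ K, |z i|) / ∑ i, |z i|)
      = ∑ L ∈ K.powersetCard l, (∑ i ∈ L, |z i|) / ∑ i, |z i| := by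
        rw [← sum_div, sum_powersetCard_sum hl, nsmul_eq_mul, mul_div_assoc]
    _ ≤ ∑ L ∈ K.powersetCard l, alphaS A L := sum_le_sum fun L _ => div_le_alphaS A hz hz0 L

end NullSpaceRatio

theorem stmt_2_general {m n k l : ℕ} (A : Matrix (Fin m) (Fin n) ℝ)
    (hl : 1 ≤ l) (hlk : l ≤ k) (hkn : k ≤ n)
    (e : Fin (n.choose l) ≃ {L : Finset (Fin n) // L.card = l})
    (hsort : ∀ i j : Fin (n.choose l), i ≤ j → alphaS A (e j).1 ≤ alphaS A (e i).1) :
    alphaK A k ≤ (1 / ((k - 1).choose (l - 1) : ℝ)) *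
      ∑ i ∈ Finset.univ.filter (fun i : Fin (n.choose l) => (i : ℕ) < k.choose l),
        alphaS A (e i).1 := by
  have hC : (0 : ℝ) < (k - 1).choose (l - 1) := by exact_mod_cast Nat.choose_pos (by omega)
  rw [one_div, inv_mul_eq_div]
  refine Real.sSup_le ?_ (div_nonneg (sum_nonneg fun i _ => alphaS_nonneg A _) hC.le)
  rintro _ ⟨K, hK, rfl⟩
  obtain ⟨K', hKK', -, hK'⟩ :=
    exists_subsuperset_card_eq (subset_univ K) hK (by simpa using hkn)
  calc alphaS A K ≤ alphaS A K' := alphaS_mono A hKK'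
    _ ≤ _ := by
      rw [le_div_iff₀' hC, ← hK']
      exact (choose_mul_alphaS_le_sum_powersetCard A hl K').trans
        (sum_powersetCard_le_sum_filter_lt e hsort K')

theorem stmt_2 {m n k l : ℕ} (A : Matrix (Fin m) (Fin n) ℝ)
    (hN : ∃ z : Fin n → ℝ, A.mulVec z = 0 ∧ z ≠ 0)
    (hl : 1 ≤ l) (hlk : l ≤ k) (hkn : k ≤ n)
    (e : Fin (n.choose l) ≃ {L : Finset (Fin n) // L.card = l})
    (hsort : ∀ i j : Fin (n.choose l), i ≤ j → alphaS A (e j).1 ≤ alphaS A (e i).1) :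
    alphaK A k ≤ (1 / ((k - 1).choose (l - 1) : ℝ)) *
      ∑ i ∈ Finset.univ.filter (fun i : Fin (n.choose l) => (i : ℕ) < k.choose l),
        alphaS A (e i).1 :=
  stmt_2_general A hl hlk hkn e hsort
end

section
/- The TSA node bound is valid: given that α_{1,{1}} ≥ α_{1,{2}} ≥ ... ≥ α_{1,{n}} (singleton proportion parameters sorted in descending order) and an index set J ⊆ {1,...,n} of size j whose maximum element is max(J), for every superset K of J with |K| = k and respecting the legitimate order (every index of K\J exceeds max(J)), α_K ≤ α_J + ∑_{i=1}^{k−j} α_{1,{i+max(J)}}. -/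
/-!
Every null-space vector `z` splits its `K`-mass into its `J`-mass plus the masses of the single
coordinates in `K \ J`, so `α_K ≤ α_J + ∑_{i ∈ K \ J} α_{i}`. Since `α_{i}` decreases in `i`
and every index of `K \ J` exceeds `max J`, an exchange argument bounds this sum by the sum of
`α_{i}` over the `k - j` indices immediately following `max J`.
-/

open Finset

namespace Finset

variable {ι : Type*} [DecidableEq ι]

theorem sum_le_sum_of_card_eq_of_forall_sdiff_le {s t : Finset ι} {f : ι → ℝ}
    (hcard : #t = #s) (h : ∀ a ∈ s \ t, ∀ b ∈ t \ s, f b ≤ f a) :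
    ∑ i ∈ t, f i ≤ ∑ i ∈ s, f i := by
  rcases (t \ s).eq_empty_or_nonempty with hts | hts
  · have hst : s \ t = ∅ := by rw [← card_eq_zero, card_sdiff_comm hcard.symm, hts, card_empty]
    rw [sdiff_eq_empty_iff_subset] at hts hst
    rw [hts.antisymm hst]
  · have hmid : ∑ i ∈ t \ s, f i ≤ ∑ i ∈ s \ t, f i := calc
      ∑ i ∈ t \ s, f i ≤ #(t \ s) • (t \ s).sup' hts f :=
        sum_le_card_nsmul _ _ _ fun b hb => le_sup' f hb
      _ = #(s \ t) • (t \ s).sup' hts f := by rw [card_sdiff_comm hcard]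
      _ ≤ ∑ i ∈ s \ t, f i :=
        card_nsmul_le_sum _ _ _ fun a ha => sup'_le hts f fun b hb => h a ha b hb
    rw [← sum_inter_add_sum_sdiff t s, ← sum_inter_add_sum_sdiff s t, inter_comm]
    exact add_le_add_right hmid _

end Finset

section NullSpaceProportion

variable {m n : ℕ} (A : Matrix (Fin m) (Fin n) ℝ)

theorem div_sum_abs_le_alphaS {z : Fin n → ℝ} (hAz : A.mulVec z = 0) (hz : z ≠ 0)
    (S : Finset (Fin n)) : (∑ i ∈ S, |z i|) / (∑ i, |z i|) ≤ alphaS A S := by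
  refine le_csSup ⟨1, ?_⟩ ⟨z, hAz, hz, rfl⟩
  rintro r ⟨w, -, -, rfl⟩
  exact div_le_one_of_le₀ (sum_le_univ_sum_of_nonneg fun i => abs_nonneg _)
    (sum_nonneg fun i _ => abs_nonneg _)

theorem alphaS_le_add_sum_alphaS_singleton (hN : ∃ z : Fin n → ℝ, A.mulVec z = 0 ∧ z ≠ 0)
    {S T : Finset (Fin n)} (hST : S ⊆ T) :
    alphaS A T ≤ alphaS A S + ∑ i ∈ T \ S, alphaS A {i} := by
  obtain ⟨z₀, hAz₀, hz₀⟩ := hN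
  refine csSup_le ⟨_, z₀, hAz₀, hz₀, rfl⟩ ?_
  rintro r ⟨z, hAz, hz, rfl⟩
  calc (∑ i ∈ T, |z i|) / (∑ i, |z i|)
      = (∑ i ∈ S, |z i|) / (∑ i, |z i|) + ∑ i ∈ T \ S, (∑ j ∈ {i}, |z j|) / (∑ i, |z i|) := by
        simp only [sum_singleton]
        rw [← sum_div, ← add_div, add_comm, sum_sdiff hST]
    _ ≤ alphaS A S + ∑ i ∈ T \ S, alphaS A {i} :=
        add_le_add (div_sum_abs_le_alphaS A hAz hz S)
          (sum_le_sum fun i _ => div_sum_abs_le_alphaS A hAz hz {i})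

end NullSpaceProportion

theorem stmt_10_general {m n k : ℕ} (A : Matrix (Fin m) (Fin n) ℝ)
    (hN : ∃ z : Fin n → ℝ, A.mulVec z = 0 ∧ z ≠ 0)
    (hsort : ∀ i j : Fin n, i ≤ j → alphaS A {j} ≤ alphaS A {i})
    (J : Finset (Fin n)) (hJne : J.Nonempty)
    (hrange : (J.max' hJne : ℕ) + 1 + (k - J.card) ≤ n)
    (K : Finset (Fin n)) (hJK : J ⊆ K) (hKk : K.card = k)
    (horder : ∀ i ∈ K \ J, J.max' hJne < i) :
    alphaS A K ≤ alphaS A J +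
      ∑ i ∈ Finset.univ.filter (fun i : Fin n =>
          (J.max' hJne : ℕ) < (i : ℕ) ∧ (i : ℕ) ≤ (J.max' hJne : ℕ) + (k - J.card)),
        alphaS A {i} := by
  set M := J.max' hJne
  set t := k - #J
  let last : Fin n := ⟨M + t, by omega⟩
  have hwindow : univ.filter (fun i : Fin n => (M : ℕ) < i ∧ (i : ℕ) ≤ M + t) = Ioc M last := by
    ext i
    simp only [mem_filter, mem_univ, true_and, mem_Ioc, Fin.lt_def, Fin.le_def]
    rfl
  have hcard : #(Ioc M last) = #(K \ J) := by
    rw [Fin.card_Ioc, card_sdiff_of_subset hJK, hKk]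
    exact Nat.add_sub_cancel_left _ _
  rw [hwindow]
  refine (alphaS_le_add_sum_alphaS_singleton A hN hJK).trans (add_le_add_right ?_ _)
  refine sum_le_sum_of_card_eq_of_forall_sdiff_le hcard.symm fun a ha b hb => hsort _ _ ?_
  have hb_gt : last < b := by
    obtain ⟨hbKJ, hbW⟩ := mem_sdiff.1 hb
    simpa [horder b hbKJ] using hbW
  exact ((mem_Ioc.1 (mem_sdiff.1 ha).1).2.trans_lt hb_gt).le

theorem stmt_10 {m n k : ℕ} (A : Matrix (Fin m) (Fin n) ℝ)
    (hN : ∃ z : Fin n → ℝ, A.mulVec z = 0 ∧ z ≠ 0)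
    (hsort : ∀ i j : Fin n, i ≤ j → alphaS A {j} ≤ alphaS A {i})
    (J : Finset (Fin n)) (hJne : J.Nonempty) (hJk : J.card ≤ k)
    (hrange : (J.max' hJne : ℕ) + 1 + (k - J.card) ≤ n)
    (K : Finset (Fin n)) (hJK : J ⊆ K) (hKk : K.card = k)
    (horder : ∀ i ∈ K \ J, J.max' hJne < i) :
    alphaS A K ≤ alphaS A J +
      ∑ i ∈ Finset.univ.filter (fun i : Fin n =>
          (J.max' hJne : ℕ) < (i : ℕ) ∧ (i : ℕ) ≤ (J.max' hJne : ℕ) + (k - J.card)),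
        alphaS A {i} :=
  stmt_10_general A hN hsort J hJne hrange K hJK hKk horder
end
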